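/- arXiv:2210.00711 — 4 statements merged into one kernel-verified Lean document; each statement's English description precedes it below -/
import Mathlib

section
/- Let R be a commutative noetherian ring and C a finitely generated R-module with Hom_R(C,C) ≅ R via the natural map. Then an element x ∈ R is a nonzerodivisor on R if and only if x is a nonzerodivisor on C. -/
set_option synthInstance.maxHeartbeats 400000
set_option maxHeartbeats 1600000

open IsLocalRing TensorProduct

section Aux
variable {R : Type*} [CommRing R] (p : Ideal R) [p.IsPrime]
  {C : Type*} [AddCommGroup C] [Module R C] [Module.Finite R C]

local notation "Rp" => Localization.AtPrime p
local notation "KK" => ResidueField (Localization.AtPrime p)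
local notation "Cp" => LocalizedModule p.primeCompl C

/-- If `p` contains the annihilator of an element of `C`, there is a nonzero `R`-linear map
from `C` to the residue field of `R` at `p`. -/
private lemma aux_exists_psi (c : C) (hcp : (Submodule.span R {c}).annihilator ≤ p) :
    ∃ ψ : C →ₗ[R] KK, ψ ≠ 0 := by
  classical
  haveI : Module.Finite Rp Cp :=
    Module.Finite.of_isLocalizedModule p.primeCompl (LocalizedModule.mkLinearMap p.primeCompl C)
  haveI hCp : Nontrivial Cp :=
    (Module.mem_support_iff_exists_annihilator (p := ⟨p, inferInstance⟩)).mpr ⟨c, hcp⟩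
  haveI : Nontrivial (KK ⊗[Rp] Cp) := by
    rw [← not_subsingleton_iff_nontrivial] at hCp ⊢
    exact fun hs => hCp (IsLocalRing.subsingleton_tensorProduct.mp hs)
  obtain ⟨i⟩ : Nonempty (Module.Free.ChooseBasisIndex KK (KK ⊗[Rp] Cp)) := inferInstance
  obtain ⟨b⟩ : Nonempty (Module.Basis (Module.Free.ChooseBasisIndex KK (KK ⊗[Rp] Cp)) KK (KK ⊗[Rp] Cp)) :=
    ⟨Module.Free.chooseBasis KK (KK ⊗[Rp] Cp)⟩
  refine ⟨(((b.coord i).restrictScalars Rp ∘ₗ TensorProduct.mk Rp KK Cp 1).restrictScalars R) ∘ₗ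
      LocalizedModule.mkLinearMap p.primeCompl C, fun h0 => ?_⟩
  have hval : ∀ c' : C, b.coord i ((1 : KK) ⊗ₜ[Rp] LocalizedModule.mk c' 1) = 0 := by
    intro c'
    have := LinearMap.congr_fun h0 c'
    simpa using this
  have hspan : Submodule.span KK
      (Set.range fun c' : C => ((1 : KK) ⊗ₜ[Rp] LocalizedModule.mk c' 1 : KK ⊗[Rp] Cp)) = ⊤ := by
    rw [eq_top_iff]
    rintro w -
    induction w using TensorProduct.induction_on with
    | zero => exact Submodule.zero_mem _
    | add x y hx hy => exact Submodule.add_mem _ hx hy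
    | tmul k v =>
      induction v using LocalizedModule.induction_on with
      | h m s =>
        have h1 : (LocalizedModule.mk m s : Cp)
            = (Localization.mk 1 s : Rp) • LocalizedModule.mk m 1 := by
          rw [LocalizedModule.mk_smul_mk, one_smul, mul_one]
        have h2 : (k ⊗ₜ[Rp] LocalizedModule.mk m s : KK ⊗[Rp] Cp)
            = ((Localization.mk 1 s : Rp) • k) • ((1 : KK) ⊗ₜ[Rp] LocalizedModule.mk m 1) := by
          rw [h1, tmul_smul, smul_tmul', smul_tmul', smul_eq_mul, mul_one]
        rw [h2]
        exact Submodule.smul_mem _ _ (Submodule.subset_span ⟨m, rfl⟩)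
  have hker : Submodule.span KK
      (Set.range fun c' : C => ((1 : KK) ⊗ₜ[Rp] LocalizedModule.mk c' 1 : KK ⊗[Rp] Cp)) ≤
      LinearMap.ker (b.coord i) := by
    rw [Submodule.span_le]
    rintro x ⟨c', rfl⟩
    exact hval c'
  rw [hspan, top_le_iff, LinearMap.ker_eq_top] at hker
  have h1 : (b.coord i) (b i) = 1 := by simp
  rw [hker] at h1
  simp only [LinearMap.zero_apply] at h1
  exact one_ne_zero h1.symm

private lemma aux_den (k : KK) :
    ∃ s : p.primeCompl, (s : R) • k ∈ LinearMap.range (Algebra.linearMap R KK) := by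
  obtain ⟨u, rfl⟩ : ∃ u : Rp, residue Rp u = k := Ideal.Quotient.mk_surjective k
  obtain ⟨⟨a, s⟩, rfl⟩ := IsLocalization.mk'_surjective p.primeCompl u
  refine ⟨s, ⟨a, ?_⟩⟩
  have h2 : algebraMap R Rp (s : R) * IsLocalization.mk' Rp a s = algebraMap R Rp a :=
    IsLocalization.mk'_spec' Rp a s
  have h3 : (s : R) • residue Rp (IsLocalization.mk' Rp a s)
      = residue Rp ((algebraMap R Rp (s : R)) * IsLocalization.mk' Rp a s) := by
    rw [map_mul, Algebra.smul_def, IsScalarTower.algebraMap_apply R Rp KK,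
      ResidueField.algebraMap_eq]
  rw [h3, h2, Algebra.linearMap_apply, IsScalarTower.algebraMap_apply R Rp KK,
    ResidueField.algebraMap_eq]

private lemma aux_smul_ne_zero {k : KK} (hk : k ≠ 0) (s : p.primeCompl) : (s : R) • k ≠ 0 := by
  have hu : IsUnit (algebraMap R Rp (s : R)) := IsLocalization.map_units Rp s
  have h1 : algebraMap R KK (s : R) ≠ 0 := by
    rw [IsScalarTower.algebraMap_apply R Rp KK, ResidueField.algebraMap_eq]
    exact (IsLocalRing.residue_ne_zero_iff_isUnit _).mpr hu
  rw [Algebra.smul_def]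
  exact mul_ne_zero h1 hk

private lemma aux_ker_eq : LinearMap.ker (Algebra.linearMap R KK) = p := by
  ext a
  rw [LinearMap.mem_ker, Algebra.linearMap_apply, IsScalarTower.algebraMap_apply R Rp KK,
    ResidueField.algebraMap_eq, IsLocalRing.residue_eq_zero_iff]
  exact (IsLocalization.AtPrime.to_map_mem_maximal_iff Rp p a)

/-- A nonzero map to the residue field at `p` can be scaled to give a nonzero map to `R ⧸ p`. -/
private lemma aux_exists_quot_map (hψex : ∃ ψ : C →ₗ[R] KK, ψ ≠ 0) :
    ∃ f : C →ₗ[R] (R ⧸ p), f ≠ 0 := by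
  classical
  obtain ⟨ψ, hψ⟩ := hψex
  obtain ⟨c₀, hc₀⟩ : ∃ c₀, ψ c₀ ≠ 0 := by
    by_contra h0
    push_neg at h0
    exact hψ (LinearMap.ext h0)
  obtain ⟨T, hT⟩ : (⊤ : Submodule R C).FG := Module.Finite.fg_top
  choose den hden using fun t : C => aux_den p (ψ t)
  have hall : ∀ c' : C, (((T.prod den : p.primeCompl) : R) • ψ) c'
      ∈ LinearMap.range (Algebra.linearMap R KK) := by
    intro c'
    have hle : Submodule.span R (T : Set C) ≤
        Submodule.comap (((T.prod den : p.primeCompl) : R) • ψ)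
          (LinearMap.range (Algebra.linearMap R KK)) := by
      rw [Submodule.span_le]
      intro t ht
      simp only [SetLike.mem_coe, Submodule.mem_comap, LinearMap.smul_apply]
      have hprod : ((T.prod den : p.primeCompl) : R)
          = (den t : R) * ((T.erase t).prod den : p.primeCompl) := by
        rw [← Finset.mul_prod_erase T den ht]
        push_cast
        ring
      rw [hprod, mul_comm, mul_smul]
      exact Submodule.smul_mem _ _ (hden t)
    have := hle (hT ▸ Submodule.mem_top : c' ∈ Submodule.span R (T : Set C))
    simpa using this
  refine ⟨((Submodule.quotEquivOfEq p (LinearMap.ker (Algebra.linearMap R KK))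
      (aux_ker_eq p).symm).trans
      (Algebra.linearMap R KK).quotKerEquivRange).symm.toLinearMap ∘ₗ
      LinearMap.codRestrict _ _ hall, fun h0 => ?_⟩
  have h1 := LinearMap.congr_fun h0 c₀
  simp only [LinearMap.comp_apply, LinearMap.zero_apply, LinearEquiv.coe_coe,
    EmbeddingLike.map_eq_zero_iff] at h1
  have h2 : (((T.prod den : p.primeCompl) : R) • ψ) c₀ = 0 := by
    simpa [Subtype.ext_iff] using h1
  simp only [LinearMap.smul_apply] at h2
  exact aux_smul_ne_zero p hc₀ (T.prod den) h2

set_option linter.unusedSectionVars false in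
/-- If `p` is an associated prime of a finite module `C` whose homothety map `R → End C`
is bijective, then `p` consists of zerodivisors of `R` in a strong sense: there is a single
nonzero `r` killed by all of `p`. -/
private theorem exists_ne_zero_ann_of_isAssociatedPrime
    [IsNoetherianRing R] (h : Function.Bijective (LinearMap.lsmul R C))
    (hp : IsAssociatedPrime p C) :
    ∃ r : R, r ≠ 0 ∧ ∀ s ∈ p, s * r = 0 := by
  obtain ⟨hprime, c, hc⟩ := isAssociatedPrime_iff.mp hp
  replace hc : p = (Submodule.span R {c}).annihilator := by
    ext s
    rw [hc, Submodule.mem_colon_singleton, Submodule.mem_bot,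
      Submodule.mem_annihilator_span_singleton]
  obtain ⟨f, hf⟩ := aux_exists_quot_map p (aux_exists_psi p c (le_of_eq hc.symm))
  have hker : p = LinearMap.ker (LinearMap.toSpanSingleton R C c) := by
    ext s
    rw [LinearMap.mem_ker, LinearMap.toSpanSingleton_apply, hc,
      Submodule.mem_annihilator_span_singleton]
  have hιinj : Function.Injective (Submodule.liftQ p (LinearMap.toSpanSingleton R C c)
      (le_of_eq hker)) := by
    rw [← LinearMap.ker_eq_bot]
    exact Submodule.ker_liftQ_eq_bot' p _ hker
  set ι := Submodule.liftQ p (LinearMap.toSpanSingleton R C c) (le_of_eq hker) with hι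
  obtain ⟨r, hr⟩ := h.2 (ι ∘ₗ f)
  have hg : ι ∘ₗ f ≠ 0 := by
    intro h0
    apply hf
    ext c'
    have := LinearMap.congr_fun h0 c'
    simp only [LinearMap.comp_apply, LinearMap.zero_apply] at this ⊢
    exact hιinj (by simpa using this)
  refine ⟨r, fun h0 => ?_, fun s hs => ?_⟩
  · apply hg
    rw [← hr, h0, map_zero]
  · apply h.1
    show LinearMap.lsmul R C (s * r) = LinearMap.lsmul R C 0
    rw [map_zero]
    ext c'
    have h1 : LinearMap.lsmul R C (s * r) c' = s • (LinearMap.lsmul R C r c') := by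
      simp [mul_smul]
    rw [h1, hr]
    obtain ⟨a, ha⟩ := Submodule.Quotient.mk_surjective p (f c')
    have h2 : s • f c' = 0 := by
      rw [← ha, ← Submodule.Quotient.mk_smul, Submodule.Quotient.mk_eq_zero]
      exact (smul_eq_mul s a ▸ p.mul_mem_right a hs)
    simp only [LinearMap.comp_apply, LinearMap.zero_apply, ← map_smul, h2, map_zero]

end Aux

theorem isSMulRegular_iff_of_homothety_bijective
    (R : Type*) [CommRing R] [IsNoetherianRing R]
    (C : Type*) [AddCommGroup C] [Module R C] [Module.Finite R C]
    (h : Function.Bijective (LinearMap.lsmul R C))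
    (x : R) :
    IsSMulRegular R x ↔ IsSMulRegular C x := by
  constructor
  · intro hR
    rw [isSMulRegular_iff_right_eq_zero_of_smul]
    intro c hcx
    by_contra hc
    obtain ⟨p, hp, hle⟩ := exists_le_isAssociatedPrime_of_isNoetherianRing R c hc
    have hxp : x ∈ p := hle (Submodule.mem_colon_singleton.mpr ((Submodule.mem_bot R).mpr hcx))
    haveI := hp.isPrime
    obtain ⟨r, hr0, hr⟩ := exists_ne_zero_ann_of_isAssociatedPrime p h hp
    apply hr0
    have hxr : x • r = x • (0 : R) := by
      rw [smul_eq_mul, smul_eq_mul, mul_zero, hr x hxp]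
    simpa using hR hxr
  · intro hC a b hab
    apply h.1
    ext c'
    show a • c' = b • c'
    apply hC
    show x • a • c' = x • b • c'
    rw [← mul_smul, ← mul_smul, show x * a = x * b from hab]
end

section
/- Let R be a commutative noetherian domain with fraction field K, and let C be a finitely generated R-module with Hom_R(C,C) ≅ R. Then C has rank 1, i.e., C ⊗_R K is a one-dimensional K-vector space. -/
open scoped TensorProduct nonZeroDivisors

theorem rank_eq_one_of_hom_self_iso
    (R : Type*) [CommRing R] [IsNoetherianRing R] [IsDomain R]
    (C : Type*) [AddCommGroup C] [Module R C] [Module.Finite R C]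
    (h : Nonempty ((C →ₗ[R] C) ≃ₗ[R] R)) :
    Module.rank (FractionRing R) (FractionRing R ⊗[R] C) = 1 := by
  classical
  set K := FractionRing R
  haveI : Module.FinitePresentation R C := Module.finitePresentation_of_finite R C
  let f : C →ₗ[R] K ⊗[R] C := (TensorProduct.mk R K C) 1
  haveI hf : IsLocalizedModule R⁰ f :=
    (isLocalizedModule_iff_isBaseChange R⁰ K f).mpr (TensorProduct.isBaseChange R C K)
  -- rank of base change equals rank over R
  have h1 := IsLocalizedModule.lift_rank_eq (N := K ⊗[R] C) R⁰ f le_rfl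
  -- End localizes
  let g : (C →ₗ[R] C) →ₗ[R] ((K ⊗[R] C) →ₗ[K] (K ⊗[R] C)) :=
    IsLocalizedModule.mapExtendScalars R⁰ f f K
  haveI : IsLocalizedModule R⁰ g :=
    Module.FinitePresentation.isLocalizedModule_mapExtendScalars R⁰ f f K
  have h2 := IsLocalizedModule.lift_rank_eq (M := C →ₗ[R] C) (N := (K ⊗[R] C) →ₗ[K] (K ⊗[R] C)) R⁰ g le_rfl
  rw [← IsLocalization.rank_eq (N := (K ⊗[R] C) →ₗ[K] (K ⊗[R] C)) K R⁰ le_rfl] at h2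
  have hR : Module.rank R (C →ₗ[R] C) = 1 := by
    have := h.some.lift_rank_eq
    rw [Module.rank_self, Cardinal.lift_one, Cardinal.lift_eq_one] at this
    exact this
  rw [hR, Cardinal.lift_one, Cardinal.lift_eq_one] at h2
  haveI : Module.Finite K (K ⊗[R] C) := Module.Finite.base_change R K C
  have hfr : (Module.finrank K ((K ⊗[R] C) →ₗ[K] (K ⊗[R] C)) : Cardinal) =
      Module.rank K ((K ⊗[R] C) →ₗ[K] (K ⊗[R] C)) := Module.finrank_eq_rank K _
  rw [h2] at hfr
  have hn : Module.finrank K ((K ⊗[R] C) →ₗ[K] (K ⊗[R] C)) = 1 := by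
    exact_mod_cast hfr
  rw [Module.finrank_linearMap] at hn
  have : Module.finrank K (K ⊗[R] C) = 1 := Nat.eq_one_of_mul_eq_one_right hn
  rw [← Module.finrank_eq_rank K (K ⊗[R] C), this, Nat.cast_one]
end

section
/- Let R be a noetherian normal domain, C a finitely generated R-module with Hom_R(C,C) ≅ R and Ext^1_R(C,C) = 0, and p a height-one prime of R. Then C_p ≅ R_p. -/
open CategoryTheory

open IsLocalizedModule in
lemma aux_bij {R : Type*} [CommRing R] (S : Submonoid R)
    {M M₁ M₂ : Type*} [AddCommGroup M] [AddCommGroup M₁] [AddCommGroup M₂]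
    [Module R M] [Module R M₁] [Module R M₂]
    (f₁ : M →ₗ[R] M₁) (f₂ : M →ₗ[R] M₂) [IsLocalizedModule S f₁] [IsLocalizedModule S f₂]
    (h : M₁ →ₗ[R] M₂) (hc : h ∘ₗ f₁ = f₂) : Function.Bijective h := by
  have he : (((iso S f₂).toLinearMap ∘ₗ (iso S f₁).symm.toLinearMap)) ∘ₗ f₁ = f₂ := by
    rw [LinearMap.comp_assoc, iso_symm_comp]
    ext m
    simp [iso_apply_mk, Module.End.algebraMap_isUnit_inv_apply_eq_iff]
  have heq : h = (iso S f₂).toLinearMap ∘ₗ (iso S f₁).symm.toLinearMap :=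
    IsLocalizedModule.ext S f₁ (map_units f₂) (hc.trans he.symm)
  rw [heq]
  exact (((iso S f₁).symm.trans (iso S f₂))).bijective

lemma pid_end_eq_self {A M : Type*} [CommRing A] [IsDomain A] [IsPrincipalIdealRing A]
    [AddCommGroup M] [Module A M] [Module.Finite A M]
    (h : Function.Bijective (LinearMap.lsmul A M)) : Nonempty (M ≃ₗ[A] A) := by
  have hM : Nontrivial M := by
    by_contra hM
    rw [not_nontrivial_iff_subsingleton] at hM
    have h10 : (LinearMap.lsmul A M) 1 = (LinearMap.lsmul A M) 0 :=
      LinearMap.ext fun x => Subsingleton.elim _ _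
    exact one_ne_zero (h.1 h10)
  have hTF : NoZeroSMulDivisors A M := by
    refine ⟨fun {r x} hrx => ?_⟩
    by_contra hcon
    push_neg at hcon
    obtain ⟨hr, hx⟩ := hcon
    set T := Submodule.torsion A M with hT
    have hFnt : Nontrivial (M ⧸ T) := by
      by_contra hF
      rw [not_nontrivial_iff_subsingleton] at hF
      have htor : Module.IsTorsion A M := by
        intro m
        have h0 : T.mkQ m = 0 := Subsingleton.elim _ _
        rw [Submodule.mkQ_apply, Submodule.Quotient.mk_eq_zero] at h0
        exact h0
      have hann := Submodule.annihilator_top_inter_nonZeroDivisors htor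
      obtain ⟨r0, hr0a, hr0n⟩ := hann
      have hz : LinearMap.lsmul A M r0 = LinearMap.lsmul A M 0 := by
        ext m
        simpa using Submodule.mem_annihilator.mp hr0a m Submodule.mem_top
      exact nonZeroDivisors.ne_zero hr0n (h.1 hz)
    have hfin : Module.Finite A (M ⧸ T) :=
      Module.Finite.of_surjective T.mkQ (Submodule.mkQ_surjective T)
    have : Module.Free A (M ⧸ T) := inferInstance
    set b := Module.Free.chooseBasis A (M ⧸ T) with hb
    have hne : Nonempty (Module.Free.ChooseBasisIndex A (M ⧸ T)) := b.index_nonempty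
    obtain ⟨i⟩ := hne
    obtain ⟨m, hm⟩ := Submodule.mkQ_surjective T (b i)
    set c : M →ₗ[A] A := (b.coord i) ∘ₗ T.mkQ with hc
    set φ : M →ₗ[A] M := c.smulRight x with hφ
    obtain ⟨r', hr'⟩ := h.2 φ
    have h1 : LinearMap.lsmul A M (r * r') = 0 := by
      ext m'
      have : r' • m' = φ m' := by rw [← hr']; rfl
      simp only [LinearMap.lsmul_apply, LinearMap.zero_apply, mul_smul, this, hφ,
        LinearMap.smulRight_apply]
      rw [smul_comm, hrx, smul_zero]
    have hrr' : r * r' = 0 := h.1 (by rw [h1, map_zero])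
    have hr'0 : r' = 0 := (mul_eq_zero.mp hrr').resolve_left hr
    have hφ0 : φ m = 0 := by rw [← hr', hr'0, map_zero]; rfl
    have : x = 0 := by
      simpa [hφ, hc, hm] using hφ0
    exact hx this
  have : Module.Free A M := inferInstance
  set b := Module.Free.chooseBasis A M with hb
  set ι := Module.Free.ChooseBasisIndex A M with hι
  have hne : Nonempty ι := b.index_nonempty
  have hsub : Subsingleton ι := by
    by_contra hns
    rw [not_subsingleton_iff_nontrivial] at hns
    obtain ⟨i, j, hij⟩ := exists_pair_ne ι
    set ψ : M →ₗ[A] M := (b.coord i).smulRight (b j) with hψ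
    obtain ⟨r, hr⟩ := h.2 ψ
    have h1 : r • b i = b j := by
      have := LinearMap.congr_fun hr (b i)
      simpa [hψ] using this
    have h2 := congrArg (fun v => b.repr v j) h1
    simp [Module.Basis.repr_self, Finsupp.single_apply, hij, Ne.symm hij] at h2
  have : Unique ι := uniqueOfSubsingleton (Classical.arbitrary ι)
  exact ⟨b.repr.trans (Finsupp.LinearEquiv.finsuppUnique A A ι)⟩

lemma loc_pid (R : Type) [CommRing R] [IsNoetherianRing R] [IsDomain R] [IsIntegrallyClosed R]
    (p : Ideal R) (hp : p.IsPrime)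
    (hht : Order.height (⟨p, hp⟩ : PrimeSpectrum R) = 1) :
    IsPrincipalIdealRing (Localization p.primeCompl) := by
  set Rp := Localization p.primeCompl with hRp
  haveI : IsLocalRing Rp := Localization.AtPrime.isLocalRing p
  haveI : IsDomain Rp := IsLocalization.isDomain_localization p.primeCompl_le_nonZeroDivisors
  haveI : IsNoetherianRing Rp := IsLocalization.isNoetherianRing p.primeCompl Rp inferInstance
  haveI : IsIntegrallyClosed Rp :=
    isIntegrallyClosed_of_isLocalization Rp p.primeCompl p.primeCompl_le_nonZeroDivisors
  have key : ∀ P : Ideal Rp, P ≠ ⊥ → P.IsPrime → P = IsLocalRing.maximalIdeal Rp := by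
    intro P hP0 hPp
    set q := P.comap (algebraMap R Rp) with hq
    have hqp : q.IsPrime := Ideal.IsPrime.comap _
    have hqle : q ≤ p := by
      intro x hxq
      by_contra hxp
      exact hPp.ne_top (Ideal.eq_top_of_isUnit_mem P hxq
        (IsLocalization.map_units Rp (⟨x, hxp⟩ : p.primeCompl)))
    have hq0 : q ≠ ⊥ := by
      intro hbot
      apply hP0
      rw [← IsLocalization.map_comap p.primeCompl Rp P, Ideal.under_def, ← hq, hbot, Ideal.map_bot]
    have hqeq : q = p := by
      by_contra hne
      have hlt : (⟨q, hqp⟩ : PrimeSpectrum R) < ⟨p, hp⟩ :=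
        lt_of_le_of_ne hqle (fun hcon => hne (congrArg PrimeSpectrum.asIdeal hcon))
      have h0 : Order.height (⟨q, hqp⟩ : PrimeSpectrum R) < (1 : ℕ) :=
        (Order.height_le_coe_iff.mp (le_of_eq hht)) _ hlt
      have hmin : IsMin (⟨q, hqp⟩ : PrimeSpectrum R) := by
        rw [← Order.height_eq_zero]
        exact ENat.lt_one_iff_eq_zero.mp (by simpa using h0)
      have hbotlt : (⟨⊥, Ideal.bot_prime⟩ : PrimeSpectrum R) ≤ ⟨q, hqp⟩ := bot_le
      have := hmin hbotlt
      exact hq0 (le_bot_iff.mp this)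
    rw [← IsLocalization.map_comap p.primeCompl Rp P, Ideal.under_def, ← hq, hqeq]
    exact Localization.AtPrime.map_eq_maximalIdeal
  have htfae := (tfae_of_isNoetherianRing_of_isLocalRing_of_isDomain Rp).out 0 3
  exact htfae.mpr ⟨inferInstance, key⟩

lemma lsmul_loc_bij (R : Type) [CommRing R] [IsNoetherianRing R]
    (C : Type) [AddCommGroup C] [Module R C] [Module.Finite R C]
    (S : Submonoid R)
    (hhom : Function.Bijective (LinearMap.lsmul R C)) :
    Function.Bijective (LinearMap.lsmul (Localization S) (LocalizedModule S C)) := by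
  set Rp := Localization S with hRp
  set Cp := LocalizedModule S C with hCp
  haveI : Module.FinitePresentation R C := Module.finitePresentation_of_finite R C
  set f := LocalizedModule.mkLinearMap S C with hf
  set F : (C →ₗ[R] C) →ₗ[R] (Cp →ₗ[Rp] Cp) := IsLocalizedModule.mapExtendScalars S f f Rp with hF
  set e : R ≃ₗ[R] (C →ₗ[R] C) := LinearEquiv.ofBijective (LinearMap.lsmul R C) hhom with he
  set G : R →ₗ[R] (Cp →ₗ[Rp] Cp) := F ∘ₗ e.toLinearMap with hG
  haveI hGl : IsLocalizedModule S G :=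
    IsLocalizedModule.of_linearEquiv_right S F e
  set H : Rp →ₗ[R] (Cp →ₗ[Rp] Cp) := (LinearMap.lsmul Rp Cp).restrictScalars R with hH
  have hcomp : H ∘ₗ (Algebra.linearMap R Rp) = G := by
    apply LinearMap.ext
    intro r
    apply LinearMap.restrictScalars_injective R
    apply IsLocalizedModule.ext S f (IsLocalizedModule.map_units f)
    ext c
    simp only [LinearMap.coe_comp, Function.comp_apply, LinearMap.coe_restrictScalars,
      Algebra.linearMap_apply, LinearMap.lsmul_apply, hH, hG, hF,
      IsLocalizedModule.mapExtendScalars_apply_apply,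
      IsLocalizedModule.map_apply]
    show (algebraMap R Rp) r • f c = f (r • c)
    rw [map_smul, algebraMap_smul]
  have hb : Function.Bijective H := aux_bij S (Algebra.linearMap R Rp) G H hcomp
  exact hb

theorem localization_at_height_one_prime_free
    (R : Type) [CommRing R] [IsNoetherianRing R] [IsDomain R] [IsIntegrallyClosed R]
    (C : Type) [AddCommGroup C] [Module R C] [Module.Finite R C]
    (hhom : Function.Bijective (LinearMap.lsmul R C))
    (hext : Subsingleton (((Ext R (ModuleCat R) 1).obj
      (Opposite.op (ModuleCat.of R C))).obj (ModuleCat.of R C)))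
    (p : Ideal R) (hp : p.IsPrime)
    (hht : Order.height (⟨p, hp⟩ : PrimeSpectrum R) = 1) :
    Nonempty (LocalizedModule p.primeCompl C ≃ₗ[Localization p.primeCompl]
      Localization p.primeCompl) := by
  haveI : IsDomain (Localization p.primeCompl) :=
    IsLocalization.isDomain_localization p.primeCompl_le_nonZeroDivisors
  haveI : IsPrincipalIdealRing (Localization p.primeCompl) := loc_pid R p hp hht
  haveI : Module.Finite (Localization p.primeCompl) (LocalizedModule p.primeCompl C) :=
    Module.Finite.of_isLocalizedModule p.primeCompl (LocalizedModule.mkLinearMap p.primeCompl C)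
  exact pid_end_eq_self (lsmul_loc_bij R C p.primeCompl hhom)
end

section
/- Let R = k[X,Y,Z]/(XY − Z^n) with k a field of characteristic 0 and n ≥ 2, and let p = (x,z) where x,z denote the images of X,Z. For 0 < m < n, the symbolic power p^(m) equals the ideal (x, z^m). -/
set_option synthInstance.maxHeartbeats 1000000
set_option maxHeartbeats 1000000

open MvPolynomial

noncomputable section Aux

variable (k : Type) [Field k]

/-- The specialization `X0 ↦ 0, X1 ↦ C X, X2 ↦ X` into `(k[Y])[T]`. -/
noncomputable def Phi : MvPolynomial (Fin 3) k →ₐ[k] Polynomial (Polynomial k) :=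
  MvPolynomial.aeval (fun i : Fin 3 =>
    if i = 0 then 0 else if i = 1 then Polynomial.C Polynomial.X else Polynomial.X)

/-- `X0 ↦ 0, X1 ↦ X1, X2 ↦ X2`. -/
noncomputable def Psi : MvPolynomial (Fin 3) k →ₐ[k] MvPolynomial (Fin 3) k :=
  MvPolynomial.aeval (fun i : Fin 3 => if i = 0 then 0 else X i)

/-- The section `(k[Y])[T] → k[X0,X1,X2]`, `Y ↦ X1, T ↦ X2`. -/
noncomputable def Sig : Polynomial (Polynomial k) →+* MvPolynomial (Fin 3) k :=
  Polynomial.eval₂RingHom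
    (Polynomial.eval₂RingHom (MvPolynomial.C : k →+* MvPolynomial (Fin 3) k) (X 1)) (X 2)

variable {k}

lemma Sig_Phi (F : MvPolynomial (Fin 3) k) : Sig k (Phi k F) = Psi k F := by
  have : (Sig k).comp ((Phi k) : MvPolynomial (Fin 3) k →+* _) =
      ((Psi k) : MvPolynomial (Fin 3) k →+* _) := by
    apply MvPolynomial.ringHom_ext
    · intro a; simp [Phi, Sig, Psi]
    · intro i
      by_cases h0 : i = 0
      · subst h0; simp [Phi, Sig, Psi]
      by_cases h1 : i = 1
      · subst h1; simp [Phi, Sig, Psi]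
      · have h2 : i = 2 := by fin_cases i <;> simp_all
        subst h2; simp [Phi, Sig, Psi]
  exact congrFun (congrArg DFunLike.coe this) F

lemma sub_psi_mem (F : MvPolynomial (Fin 3) k) :
    F - Psi k F ∈ Ideal.span {(X 0 : MvPolynomial (Fin 3) k)} := by
  induction F using MvPolynomial.induction_on with
  | C a => simp [Psi]
  | add p q hp hq =>
      have h := Ideal.add_mem _ hp hq
      have e : p + q - Psi k (p + q) = (p - Psi k p) + (q - Psi k q) := by
        rw [map_add]; ring
      rw [e]; exact h
  | mul_X p i hp =>
      by_cases h0 : i = 0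
      · subst h0
        have e : p * X 0 - Psi k (p * X 0) = p * X 0 := by simp [Psi]
        rw [e]
        exact Ideal.mul_mem_left _ _ (Ideal.subset_span rfl)
      · have e : p * X i - Psi k (p * X i) = (p - Psi k p) * X i := by
          simp [Psi, h0]; ring
        rw [e]
        exact Ideal.mul_mem_right _ _ hp

lemma lift_of_dvd {m : ℕ} {F : MvPolynomial (Fin 3) k}
    (h : (Polynomial.X : Polynomial (Polynomial k)) ^ m ∣ Phi k F) :
    F ∈ Ideal.span {(X 0 : MvPolynomial (Fin 3) k), (X 2) ^ m} := by
  obtain ⟨g, hg⟩ := h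
  obtain ⟨a, ha⟩ := Ideal.mem_span_singleton'.mp (sub_psi_mem (k := k) F)
  rw [Ideal.mem_span_pair]
  refine ⟨a, Sig k g, ?_⟩
  have h2 : Psi k F = Sig k g * X 2 ^ m := by
    rw [← Sig_Phi, hg, map_mul, map_pow]
    have : Sig k Polynomial.X = X 2 := by simp [Sig]
    rw [this]; ring
  rw [← sub_add_cancel F (Psi k F), ha, h2]

/-- Forward: membership in `(x, z^m)` in the quotient gives `X^m ∣ Φ F`. -/
lemma Qfwd {n m : ℕ} (hmn : m ≤ n) {F : MvPolynomial (Fin 3) k}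
    (h : Ideal.Quotient.mk (Ideal.span {(X 0 : MvPolynomial (Fin 3) k) * X 1 - X 2 ^ n}) F ∈
      Ideal.span {Ideal.Quotient.mk _ (X 0 : MvPolynomial (Fin 3) k),
        (Ideal.Quotient.mk _ (X 2 : MvPolynomial (Fin 3) k)) ^ m}) :
    (Polynomial.X : Polynomial (Polynomial k)) ^ m ∣ Phi k F := by
  obtain ⟨u, v, huv⟩ := Ideal.mem_span_pair.mp h
  obtain ⟨U, rfl⟩ := Ideal.Quotient.mk_surjective u
  obtain ⟨V, rfl⟩ := Ideal.Quotient.mk_surjective v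
  have hmk : Ideal.Quotient.mk (Ideal.span {(X 0 : MvPolynomial (Fin 3) k) * X 1 - X 2 ^ n})
      (U * X 0 + V * X 2 ^ m) = Ideal.Quotient.mk _ F := by
    simp only [map_add, map_mul, map_pow]; exact huv
  have hsub := Ideal.Quotient.eq.mp hmk
  obtain ⟨c, hc⟩ := Ideal.mem_span_singleton'.mp hsub
  obtain ⟨d, rfl⟩ : ∃ d, n = d + m := ⟨n - m, by omega⟩
  have e : F = U * X 0 + V * X 2 ^ m - c * (X 0 * X 1 - X 2 ^ (d + m)) := by
    linear_combination hc
  refine ⟨Phi k V + Phi k c * Polynomial.X ^ d, ?_⟩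
  rw [e]
  have h0 : Phi k (X 0) = 0 := by simp [Phi]
  have h1 : Phi k (X 2) = Polynomial.X := by simp [Phi]
  simp only [map_sub, map_add, map_mul, map_pow, h0, h1]
  ring

/-- Backward: `X^m ∣ Φ F` gives membership in `(x, z^m)` in the quotient. -/
lemma Qbwd {n m : ℕ} {F : MvPolynomial (Fin 3) k}
    (h : (Polynomial.X : Polynomial (Polynomial k)) ^ m ∣ Phi k F) :
    Ideal.Quotient.mk (Ideal.span {(X 0 : MvPolynomial (Fin 3) k) * X 1 - X 2 ^ n}) F ∈
      Ideal.span {Ideal.Quotient.mk _ (X 0 : MvPolynomial (Fin 3) k),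
        (Ideal.Quotient.mk _ (X 2 : MvPolynomial (Fin 3) k)) ^ m} := by
  obtain ⟨a, b, hab⟩ := Ideal.mem_span_pair.mp (lift_of_dvd h)
  rw [Ideal.mem_span_pair]
  exact ⟨Ideal.Quotient.mk _ a, Ideal.Quotient.mk _ b, by
    simp only [← map_pow, ← map_mul, ← map_add]; rw [hab]⟩

lemma pow_sup_le {R : Type*} [CommRing R] (I J : Ideal R) (m : ℕ) :
    (I ⊔ J) ^ m ≤ I ⊔ J ^ m := by
  induction m with
  | zero => simp
  | succ m ih =>
      rw [pow_succ]
      calc (I ⊔ J) ^ m * (I ⊔ J) ≤ (I ⊔ J ^ m) * (I ⊔ J) := Ideal.mul_mono ih le_rfl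
        _ ≤ I ⊔ J ^ (m + 1) := by
            rw [Ideal.mul_sup]
            apply sup_le
            · exact le_sup_of_le_left Ideal.mul_le_right
            · rw [Ideal.sup_mul]
              apply sup_le
              · exact le_sup_of_le_left Ideal.mul_le_left
              · rw [← pow_succ]; exact le_sup_right

end Aux

/-- In `R = k[X,Y,Z]/(XY - Zⁿ)` with `p = (x,z)`, the symbolic power
`p⁽ᵐ⁾ = pᵐR_p ∩ R = {r | ∃ s ∉ p, s*r ∈ pᵐ}` equals `(x, zᵐ)` for `0 < m < n`. -/
theorem symbolicPower_eq (k : Type) [Field k] [CharZero k]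
    (n : ℕ) (hn : 2 ≤ n) (m : ℕ) (hm0 : 0 < m) (hmn : m < n) :
    ∀ (x y z : MvPolynomial (Fin 3) k ⧸
        Ideal.span {(X 0 : MvPolynomial (Fin 3) k) * X 1 - X 2 ^ n}),
      x = Ideal.Quotient.mk _ (X 0) → y = Ideal.Quotient.mk _ (X 1) →
      z = Ideal.Quotient.mk _ (X 2) →
    {r | ∃ s, s ∉ Ideal.span {x, z} ∧ s * r ∈ Ideal.span {x, z} ^ m} =
      ↑(Ideal.span {x, z ^ m}) := by
  intro x y z hx hy hz
  subst hx hy hz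
  ext r
  simp only [Set.mem_setOf_eq, SetLike.mem_coe]
  constructor
  · rintro ⟨s, hs, hsr⟩
    obtain ⟨S, rfl⟩ := Ideal.Quotient.mk_surjective s
    obtain ⟨Rr, rfl⟩ := Ideal.Quotient.mk_surjective r
    have hsub : (Ideal.span {Ideal.Quotient.mk
          (Ideal.span {(X 0 : MvPolynomial (Fin 3) k) * X 1 - X 2 ^ n}) (X 0),
        Ideal.Quotient.mk _ (X 2)}) ^ m ≤
        Ideal.span {Ideal.Quotient.mk _ (X 0), (Ideal.Quotient.mk _ (X 2)) ^ m} := by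
      rw [Ideal.span_insert, Ideal.span_insert]
      refine (pow_sup_le _ _ m).trans ?_
      rw [Ideal.span_singleton_pow]
    have h2 := hsub hsr
    rw [← map_mul] at h2
    have h3 := Qfwd (le_of_lt hmn) h2
    rw [map_mul] at h3
    have hXS : ¬ (Polynomial.X : Polynomial (Polynomial k)) ∣ Phi k S := by
      intro hdvd
      apply hs
      have hq := Qbwd (n := n) (m := 1) (F := S) (by rwa [pow_one])
      rwa [pow_one] at hq
    have h4 := Polynomial.prime_X.pow_dvd_of_dvd_mul_left m hXS h3
    exact Qbwd h4
  · intro hr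
    refine ⟨Ideal.Quotient.mk _ (X 1), ?_, ?_⟩
    · intro hy'
      have hq := Qfwd (n := n) (m := 1) (by omega) (F := X 1) (by rwa [pow_one])
      rw [pow_one] at hq
      have : Phi k (X 1 : MvPolynomial (Fin 3) k) = Polynomial.C Polynomial.X := by simp [Phi]
      rw [this, Polynomial.X_dvd_iff] at hq
      simp at hq
    · obtain ⟨a, b, hab⟩ := Ideal.mem_span_pair.mp hr
      set p : Ideal _ := Ideal.span {Ideal.Quotient.mk
        (Ideal.span {(X 0 : MvPolynomial (Fin 3) k) * X 1 - X 2 ^ n}) (X 0),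
        Ideal.Quotient.mk _ (X 2)}
      have hz : Ideal.Quotient.mk (Ideal.span {(X 0 : MvPolynomial (Fin 3) k) * X 1 - X 2 ^ n})
          (X 2) ∈ p := Ideal.subset_span (by simp)
      have hzm : (Ideal.Quotient.mk (Ideal.span {(X 0 : MvPolynomial (Fin 3) k) * X 1 - X 2 ^ n})
          (X 2)) ^ m ∈ p ^ m := Ideal.pow_mem_pow hz m
      obtain ⟨d, hd⟩ : ∃ d, n = d + m := ⟨n - m, by omega⟩
      have hyx : Ideal.Quotient.mk (Ideal.span {(X 0 : MvPolynomial (Fin 3) k) * X 1 - X 2 ^ n})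
          (X 1) * Ideal.Quotient.mk _ (X 0) =
          (Ideal.Quotient.mk _ (X 2)) ^ d * (Ideal.Quotient.mk _ (X 2)) ^ m := by
        rw [← map_mul, ← map_pow, ← map_pow, ← map_mul]
        apply Ideal.Quotient.eq.mpr
        have e2 : (X 1 : MvPolynomial (Fin 3) k) * X 0 - X 2 ^ d * X 2 ^ m =
            X 0 * X 1 - X 2 ^ n := by rw [hd]; ring
        rw [e2]
        exact Ideal.subset_span rfl
      have key : Ideal.Quotient.mk (Ideal.span {(X 0 : MvPolynomial (Fin 3) k) * X 1 - X 2 ^ n})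
          (X 1) * r = (a * (Ideal.Quotient.mk _ (X 2)) ^ d +
            Ideal.Quotient.mk _ (X 1) * b) * (Ideal.Quotient.mk _ (X 2)) ^ m := by
        rw [← hab]
        linear_combination a * hyx
      rw [key]
      exact Ideal.mul_mem_left _ _ hzm
end
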